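/- Let p be an odd prime such that M = (3^p − 1)/2 is prime. Define s_0 = 2 and s_{k+1} = s_k(4s_k² − 3). Then M divides s_p − 26. -/
import Mathlib


def cubicSeq : ℕ → ℤ
  | 0 => 2
  | k + 1 => cubicSeq k * (4 * cubicSeq k ^ 2 - 3)

theorem base_three_mersenne_test (p : ℕ) (hp : p.Prime) (hodd : Odd p)
    (hM : Nat.Prime ((3 ^ p - 1) / 2)) :
    (((3 ^ p - 1) / 2 : ℕ) : ℤ) ∣ cubicSeq p - 26 := by
  set M := (3 ^ p - 1) / 2 with hMdef
  haveI : Fact M.Prime := ⟨hM⟩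
  have hppos : 1 ≤ p := hp.one_lt.le.trans' (by norm_num)
  have hmod : (3 : ℕ) ^ p % 2 = 1 := by
    rw [Nat.pow_mod]; simp
  have h3p : 2 * M + 1 = 3 ^ p := by
    have h1 : 1 ≤ (3:ℕ) ^ p := Nat.one_le_pow _ _ (by norm_num)
    omega
  -- 3^p ≡ 1 mod M
  have h3p1 : ((3 : ZMod M)) ^ p = 1 := by
    have : ((3 ^ p : ℕ) : ZMod M) = ((2 * M + 1 : ℕ) : ZMod M) := by rw [h3p]
    push_cast at this
    simpa [ZMod.natCast_self] using this
  -- square root of 3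
  set x : ZMod M := 3 ^ ((p + 1) / 2) with hxdef
  have hpe : 2 * ((p + 1) / 2) = p + 1 := by
    obtain ⟨m, hm⟩ := hodd; omega
  have hx2 : x ^ 2 = 3 := by
    rw [hxdef, ← pow_mul, Nat.mul_comm, hpe, pow_succ, h3p1, one_mul]
  set α : ZMod M := 2 + x with hαdef
  set β : ZMod M := 2 - x with hβdef
  have hαβ : α * β = 1 := by
    rw [hαdef, hβdef]
    linear_combination -hx2
  -- main induction
  have main : ∀ k, (2 : ZMod M) * ((cubicSeq k : ℤ) : ZMod M) = α ^ (3 ^ k) + β ^ (3 ^ k) := by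
    intro k
    induction k with
    | zero => simp [cubicSeq, hαdef, hβdef]; ring
    | succ k ih =>
      have huv : α ^ (3 ^ k) * β ^ (3 ^ k) = 1 := by
        rw [← mul_pow, hαβ, one_pow]
      have h3 : (3:ℕ) ^ (k+1) = 3 ^ k * 3 := by ring
      rw [h3, pow_mul, pow_mul]
      show (2 : ZMod M) * ((cubicSeq k * (4 * cubicSeq k ^ 2 - 3) : ℤ) : ZMod M) = _
      push_cast
      push_cast at ih
      linear_combination (4 * ((cubicSeq k : ℤ) : ZMod M)^2 + 2 * ((cubicSeq k : ℤ) : ZMod M) * (α ^ 3 ^ k + β ^ 3 ^ k) + (α ^ 3 ^ k + β ^ 3 ^ k)^2 - 3) * ih + 3 * (α ^ 3 ^ k + β ^ 3 ^ k) * huv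
  -- evaluate at p
  have hαM : α ^ M = α := ZMod.pow_card α
  have hβM : β ^ M = β := ZMod.pow_card β
  have hfin : (2 : ZMod M) * ((cubicSeq p : ℤ) : ZMod M) = 52 := by
    have h1 : α ^ (3 ^ p) = α ^ 3 := by
      rw [← h3p, pow_succ, mul_comm 2 M, pow_mul, hαM]; ring
    have h2 : β ^ (3 ^ p) = β ^ 3 := by
      rw [← h3p, pow_succ, mul_comm 2 M, pow_mul, hβM]; ring
    rw [main p, h1, h2, hαdef, hβdef]
    linear_combination (12 : ZMod M) * hx2
  have hMne2 : M ≠ 2 := by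
    intro h
    rw [h] at h3p
    have h3 : (3:ℕ) ∣ 3 ^ p := dvd_pow_self 3 (by omega)
    omega
  have h2ne : (2 : ZMod M) ≠ 0 := by
    intro h
    have hdvd : (M : ℕ) ∣ 2 :=
      (ZMod.natCast_eq_zero_iff 2 M).mp (by exact_mod_cast h)
    exact hMne2 ((Nat.prime_dvd_prime_iff_eq hM Nat.prime_two).mp hdvd)
  have hval : ((cubicSeq p : ℤ) : ZMod M) = 26 := by
    have : (2 : ZMod M) * ((cubicSeq p : ℤ) : ZMod M) = 2 * 26 := by rw [hfin]; norm_num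
    exact mul_left_cancel₀ h2ne this
  have : (((cubicSeq p - 26 : ℤ)) : ZMod M) = 0 := by
    push_cast
    rw [hval]; ring
  exact (ZMod.intCast_zmod_eq_zero_iff_dvd _ _).mp this
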